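/- Assume the SCAR assumption e(x) = e_m for all x ∈ ℝ^d with 0 < e_m ≤ 1, that S has VC dimension V ≥ 2, and let h ∈ (0,1]. Then for every 0 < p < 1/(V−1), the minimax risk satisfies R(S,h) ≥ (p·h/4)·(V−1)·(1 − √(2·p·e_m·h²·n)). -/

import Mathlib

open MeasureTheory ProbabilityTheory Real Filter Topology

noncomputable section

/-- A classifier: a measurable `{0,1}`-valued function on the feature space. -/
def IsClassifier {α : Type*} [MeasurableSpace α] (g : α → ℝ) : Prop :=
  Measurable g ∧ ∀ x, g x = 0 ∨ g x = 1

/-- `η` is a version of the regression function `x ↦ P(Y = 1 ∣ X = x)`. -/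
def IsRegression {Ω α : Type*} [MeasurableSpace Ω] [MeasurableSpace α]
    (P : Measure Ω) (X : Ω → α) (Y : Ω → ℝ) (η : α → ℝ) : Prop :=
  Measurable η ∧ (∀ x, 0 ≤ η x ∧ η x ≤ 1) ∧
    ∀ A : Set α, MeasurableSet A →
      ∫ ω in X ⁻¹' A, Y ω ∂P = ∫ ω in X ⁻¹' A, η (X ω) ∂P

/-- `e` is the propensity: `P(S = 1 ∣ Y = 1, X = x) = e x` and
`P(S = 1 ∣ Y = 0, X = x) = 0` (the latter is equivalent to `S ≤ Y` a.s.). -/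
def IsPropensity {Ω α : Type*} [MeasurableSpace Ω] [MeasurableSpace α]
    (P : Measure Ω) (X : Ω → α) (Y S : Ω → ℝ) (e : α → ℝ) : Prop :=
  Measurable e ∧ (∀ x, 0 ≤ e x ∧ e x ≤ 1) ∧
    (∀ᵐ ω ∂P, S ω ≤ Y ω) ∧
    ∀ A : Set α, MeasurableSet A →
      ∫ ω in X ⁻¹' A, S ω ∂P = ∫ ω in X ⁻¹' A, e (X ω) * Y ω ∂P

/-- Misclassification risk `R(g) = P(g(X) ≠ Y)`. -/
def risk {Ω α : Type*} [MeasurableSpace Ω]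
    (P : Measure Ω) (X : Ω → α) (Y : Ω → ℝ) (g : α → ℝ) : ℝ :=
  (P {ω | g (X ω) ≠ Y ω}).toReal

/-- The Bayes classifier `g*(x) = 1{η(x) ≥ 1/2}`. -/
def bayes {α : Type*} (η : α → ℝ) : α → ℝ := fun x => if (1 : ℝ) / 2 ≤ η x then 1 else 0

/-- Excess risk `ℓ(g, g*) = R(g) − R(g*)`. -/
def excessRisk {Ω α : Type*} [MeasurableSpace Ω]
    (P : Measure Ω) (X : Ω → α) (Y : Ω → ℝ) (η : α → ℝ) (g : α → ℝ) : ℝ :=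
  risk P X Y g - risk P X Y (bayes η)

/-- The SAR loss `r_SAR(g,(x,s)) = (1{s=1}/e(x))·(2·1{g(x)≠1} − 1) + 1{g(x)≠0}`. -/
def rSAR {α : Type*} (e : α → ℝ) (g : α → ℝ) (p : α × ℝ) : ℝ :=
  (if p.2 = 1 then (1 : ℝ) else 0) / e p.1 * (2 * (if g p.1 ≠ 1 then (1 : ℝ) else 0) - 1)
    + (if g p.1 ≠ 0 then (1 : ℝ) else 0)

/-- Empirical risk `(1/n)·Σ_{i=1}^n r(g,(X_i,S_i))` of a generic loss `r` on an `n`-sample. -/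
def empRisk {Ω α : Type*} (r : (α → ℝ) → α × ℝ → ℝ) (X : Ω → α) (S : Ω → ℝ) (n : ℕ)
    (g : α → ℝ) (ω : Fin n → Ω) : ℝ :=
  (1 / (n : ℝ)) * ∑ i : Fin n, r g (X (ω i), S (ω i))

/-- A finite set of points is shattered by the class `𝒮`: every labeling is realized. -/
def Shatters {α : Type*} (𝒮 : Set (α → ℝ)) {k : ℕ} (x : Fin k → α) : Prop :=
  ∀ b : Fin k → Bool, ∃ g ∈ 𝒮, ∀ i, g (x i) = if b i then 1 else 0

/-- The class `𝒮` has VC dimension exactly `V`. -/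
def HasVCDim {α : Type*} (𝒮 : Set (α → ℝ)) (V : ℕ) : Prop :=
  (∃ x : Fin V → α, Shatters 𝒮 x) ∧ ∀ x : Fin (V + 1) → α, ¬ Shatters 𝒮 x

/-- Separability assumption (A₁): a countable subclass `𝒮' ⊆ 𝒮` that is dense in
the sense of pointwise convergence of the loss `r`. -/
def SeparableClass {α : Type*} (r : (α → ℝ) → α × ℝ → ℝ) (𝒮 𝒮' : Set (α → ℝ)) : Prop :=
  𝒮' ⊆ 𝒮 ∧ 𝒮'.Countable ∧
    ∀ g ∈ 𝒮, ∃ u : ℕ → α → ℝ, (∀ k, u k ∈ 𝒮') ∧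
      ∀ p : α × ℝ, Tendsto (fun k => r (u k) p) atTop (𝓝 (r g p))

/-- The set of admissible distributions for the minimax risk: `μ` is the joint law of
`(X, Y, S)`, with regression function `η` satisfying the Massart noise condition with
margin `h`, Bayes classifier in `𝒮`, and propensity `e`. -/
def PUAdmissible {α : Type*} [MeasurableSpace α] (e : α → ℝ) (𝒮 : Set (α → ℝ)) (h : ℝ)
    (μ : Measure (α × ℝ × ℝ)) (η : α → ℝ) : Prop :=
  IsProbabilityMeasure μ ∧
    (∀ᵐ p ∂μ, (p.2.1 = 0 ∨ p.2.1 = 1) ∧ (p.2.2 = 0 ∨ p.2.2 = 1)) ∧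
    IsRegression μ (fun p => p.1) (fun p => p.2.1) η ∧
    IsPropensity μ (fun p => p.1) (fun p => p.2.1) (fun p => p.2.2) e ∧
    bayes η ∈ 𝒮 ∧ (∀ x, h ≤ |2 * η x - 1|)

/-- Minimax risk: infimum over estimators (functions of the observed `(X_i, S_i)` sample,
valued in `𝒮`) of the supremum over admissible distributions of the expected excess risk. -/
def minimaxRisk {α : Type*} [MeasurableSpace α] (e : α → ℝ) (𝒮 : Set (α → ℝ)) (h : ℝ)
    (n : ℕ) : ℝ :=
  ⨅ ghat : {f : (Fin n → α × ℝ) → α → ℝ // ∀ z, f z ∈ 𝒮},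
    ⨆ q : {q : Measure (α × ℝ × ℝ) × (α → ℝ) // PUAdmissible e 𝒮 h q.1 q.2},
      ∫ z, excessRisk q.1.1 (fun p => p.1) (fun p => p.2.1) q.1.2 (ghat.1 z)
        ∂(Measure.pi fun _ : Fin n => q.1.1.map (fun p => (p.1, p.2.2)))


/-!
Assouad's method. Take `V` points `x j` shattered by `𝒮` and, for every vertex `σ` of the
hypercube `{0,1}^V`, a classifier `g_σ ∈ 𝒮` with `g_σ (x j) = σ j`. Under `P_σ` the feature is
`x j` with probability `p` for `j ≠ j₀` (and `1 - (V - 1) p` for `j₀`), the regression function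
is `(1 - h) / 2 + h g_σ`, and a positive example is labelled with probability `e_m`; an
estimator then pays `p h` of excess risk for each `j ≠ j₀` at which it disagrees with `σ`.
Flipping one coordinate of `σ` changes the law of an observation `(X, S)` only on an atom of
mass `p`, where the Bhattacharyya coefficient of the two Bernoulli laws of `S` is at least
`1 - e_m h²`. Tensorisation and Le Cam's inequality keep the overlap of the two sample laws
above `1 - √(2 p e_m h² n)`, and Assouad's lemma turns this into the bound.
-/

open Finset

section AtomicMeasure

variable {ι β : Type*} [Fintype ι] [MeasurableSpace β] [MeasurableSingletonClass β]

def atomicMeasure (w : ι → ℝ) (z : ι → β) : Measure β :=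
  ∑ a, ENNReal.ofReal (w a) • Measure.dirac (z a)

lemma atomicMeasure_apply (w : ι → ℝ) (z : ι → β) (s : Set β) :
    atomicMeasure w z s = ∑ a, ENNReal.ofReal (w a) * s.indicator 1 (z a) := by
  simp [atomicMeasure, Measure.dirac_apply]

instance (w : ι → ℝ) (z : ι → β) : IsFiniteMeasure (atomicMeasure w z) where
  measure_univ_lt_top := by simp [atomicMeasure_apply, ENNReal.sum_lt_top]

lemma atomicMeasure_apply_toReal {w : ι → ℝ} (hw : ∀ a, 0 ≤ w a) (z : ι → β)
    (s : Set β) [DecidablePred (· ∈ s)] :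
    (atomicMeasure w z s).toReal = ∑ a, if z a ∈ s then w a else 0 := by
  rw [atomicMeasure_apply, ENNReal.toReal_sum fun a _ => by
    by_cases h : z a ∈ s <;> simp [h]]
  refine sum_congr rfl fun a _ => ?_
  by_cases h : z a ∈ s <;> simp [h, hw a]

lemma isProbabilityMeasure_atomicMeasure {w : ι → ℝ} (hw : ∀ a, 0 ≤ w a)
    (hw1 : ∑ a, w a = 1) (z : ι → β) : IsProbabilityMeasure (atomicMeasure w z) := by
  constructor
  rw [atomicMeasure_apply, ← ENNReal.ofReal_one, ← hw1,
    ENNReal.ofReal_sum_of_nonneg fun a _ => hw a]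
  simp

lemma integral_atomicMeasure {w : ι → ℝ} (hw : ∀ a, 0 ≤ w a) (z : ι → β)
    (f : β → ℝ) :
    ∫ b, f b ∂atomicMeasure w z = ∑ a, w a * f (z a) := by
  rw [atomicMeasure, integral_finsetSum_measure fun a _ =>
    (integrable_dirac enorm_lt_top).smul_measure ENNReal.ofReal_ne_top]
  simp [integral_smul_measure, hw]

lemma setIntegral_atomicMeasure {w : ι → ℝ} (hw : ∀ a, 0 ≤ w a) (z : ι → β)
    (f : β → ℝ) {s : Set β} (hs : MeasurableSet s) [DecidablePred (· ∈ s)] :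
    ∫ b in s, f b ∂atomicMeasure w z = ∑ a, if z a ∈ s then w a * f (z a) else 0 := by
  rw [← integral_indicator hs, integral_atomicMeasure hw]
  refine sum_congr rfl fun a _ => ?_
  by_cases h : z a ∈ s <;> simp [h]

omit [MeasurableSingletonClass β] in
lemma map_atomicMeasure {γ : Type*} [MeasurableSpace γ] [MeasurableSingletonClass γ]
    (w : ι → ℝ) (z : ι → β) {φ : β → γ} (hφ : Measurable φ) :
    (atomicMeasure w z).map φ = atomicMeasure w (φ ∘ z) := by
  simp [atomicMeasure, Measure.map_finset_sum' hφ.aemeasurable, Measure.map_smul,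
    Measure.map_dirac' hφ]

omit [MeasurableSingletonClass β] in
lemma atomicMeasure_comp_fst {κ : Type*} [Fintype κ] {w : ι × κ → ℝ}
    (hw : ∀ a, 0 ≤ w a) (z : ι → β) :
    atomicMeasure w (fun a => z a.1) = atomicMeasure (fun i => ∑ k, w (i, k)) z := by
  simp only [atomicMeasure, Fintype.sum_prod_type, ← sum_smul,
    ENNReal.ofReal_sum_of_nonneg fun k _ => hw _]

lemma ae_atomicMeasure {w : ι → ℝ} {z : ι → β} {P : β → Prop}
    (h : ∀ a, w a ≠ 0 → P (z a)) : ∀ᵐ b ∂atomicMeasure w z, P b := by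
  rw [ae_iff, atomicMeasure_apply]
  refine sum_eq_zero fun a _ => ?_
  by_cases hw : w a = 0
  · simp [hw]
  · simp [h a hw]

lemma pi_atomicMeasure (n : ℕ) {w : ι → ℝ} (hw : ∀ a, 0 ≤ w a) (z : ι → β) :
    Measure.pi (fun _ : Fin n => atomicMeasure w z)
      = atomicMeasure (fun t : Fin n → ι => ∏ i, w (t i)) (fun t i => z (t i)) := by
  refine Measure.pi_eq fun s _ => ?_
  simp only [atomicMeasure_apply, Fintype.prod_sum, ← coe_univ, Set.indicator_pi_one_apply,
    ENNReal.ofReal_prod_of_nonneg fun i _ => hw _, prod_mul_distrib]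

end AtomicMeasure

section Bhattacharyya

variable {ι : Type*} [Fintype ι] {u v : ι → ℝ}

def bhattacharyya (u v : ι → ℝ) : ℝ := ∑ i, √(u i * v i)

lemma bhattacharyya_comm (u v : ι → ℝ) : bhattacharyya u v = bhattacharyya v u := by
  simp only [bhattacharyya, mul_comm]

lemma bhattacharyya_nonneg (u v : ι → ℝ) : 0 ≤ bhattacharyya u v :=
  sum_nonneg fun _ _ => Real.sqrt_nonneg _

lemma bhattacharyya_self (hu : ∀ i, 0 ≤ u i) : bhattacharyya u u = ∑ i, u i :=
  sum_congr rfl fun i _ => Real.sqrt_mul_self (hu i)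

lemma sum_sq_sqrt_sub_sqrt (hu : ∀ i, 0 ≤ u i) (hv : ∀ i, 0 ≤ v i) :
    ∑ i, (√(u i) - √(v i)) ^ 2 = ∑ i, u i + ∑ i, v i - 2 * bhattacharyya u v := by
  simp only [bhattacharyya, mul_sum, ← sum_add_distrib, ← sum_sub_distrib]
  refine sum_congr rfl fun i _ => ?_
  rw [Real.sqrt_mul (hu i), sub_sq, Real.sq_sqrt (hu i), Real.sq_sqrt (hv i)]
  ring

/-- Le Cam's inequality: total variation is controlled by the Hellinger distance. -/
lemma one_sub_sqrt_le_sum_min (hu : ∀ i, 0 ≤ u i) (hv : ∀ i, 0 ≤ v i)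
    (hu1 : ∑ i, u i = 1) (hv1 : ∑ i, v i = 1) :
    1 - √(2 * (1 - bhattacharyya u v)) ≤ ∑ i, min (u i) (v i) := by
  have hmin : ∀ i, min (u i) (v i) = (u i + v i - |u i - v i|) / 2 := fun i => by
    rw [← max_sub_min_eq_abs', ← min_add_max]; ring
  have hfactor : ∀ i, |u i - v i| = |√(u i) - √(v i)| * (√(u i) + √(v i)) := fun i => by
    have h : u i - v i = (√(u i) - √(v i)) * (√(u i) + √(v i)) := by
      linear_combination Real.sq_sqrt (hv i) - Real.sq_sqrt (hu i)
    rw [h, abs_mul, abs_of_nonneg (by positivity : 0 ≤ √(u i) + √(v i))]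
  have hsum : ∑ i, (√(u i) + √(v i)) ^ 2 ≤ 4 := by
    calc ∑ i, (√(u i) + √(v i)) ^ 2 ≤ ∑ i, 2 * (u i + v i) := sum_le_sum fun i _ => by
          nlinarith [sq_nonneg (√(u i) - √(v i)), Real.sq_sqrt (hu i), Real.sq_sqrt (hv i)]
      _ = 4 := by rw [← mul_sum, sum_add_distrib, hu1, hv1]; norm_num
  have htv : ∑ i, |u i - v i| ≤ 2 * √(2 * (1 - bhattacharyya u v)) := by
    calc ∑ i, |u i - v i|
        = ∑ i, |√(u i) - √(v i)| * (√(u i) + √(v i)) := sum_congr rfl fun i _ => hfactor i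
      _ ≤ √(∑ i, |√(u i) - √(v i)| ^ 2) * √(∑ i, (√(u i) + √(v i)) ^ 2) :=
          Real.sum_mul_le_sqrt_mul_sqrt _ _ _
      _ ≤ √(2 * (1 - bhattacharyya u v)) * √4 := by
          simp only [sq_abs]
          rw [sum_sq_sqrt_sub_sqrt hu hv, hu1, hv1]
          gcongr
          exact le_of_eq (by ring)
      _ = 2 * √(2 * (1 - bhattacharyya u v)) := by
          rw [show (4 : ℝ) = 2 ^ 2 by norm_num, Real.sqrt_sq zero_le_two, mul_comm]
  simp only [hmin, ← sum_div, sum_sub_distrib, sum_add_distrib, hu1, hv1]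
  linarith

lemma bhattacharyya_pi (hu : ∀ i, 0 ≤ u i) (hv : ∀ i, 0 ≤ v i) (n : ℕ) :
    bhattacharyya (fun t : Fin n → ι => ∏ i, u (t i)) (fun t => ∏ i, v (t i))
      = bhattacharyya u v ^ n := by
  rw [bhattacharyya, bhattacharyya, Fintype.sum_pow]
  refine sum_congr rfl fun t _ => ?_
  rw [← prod_mul_distrib, Real.sqrt_prod _ fun i _ => mul_nonneg (hu _) (hv _)]

lemma sum_prod_eq_one (hu1 : ∑ i, u i = 1) (n : ℕ) :
    ∑ t : Fin n → ι, ∏ i, u (t i) = 1 := by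
  rw [← Fintype.sum_pow, hu1, one_pow]

lemma one_sub_sqrt_le_sum_min_pi (hu : ∀ i, 0 ≤ u i) (hv : ∀ i, 0 ≤ v i)
    (hu1 : ∑ i, u i = 1) (hv1 : ∑ i, v i = 1) (n : ℕ) :
    1 - √(2 * n * (1 - bhattacharyya u v))
      ≤ ∑ t : Fin n → ι, min (∏ i, u (t i)) (∏ i, v (t i)) := by
  have hpow : 1 - bhattacharyya u v ^ n ≤ n * (1 - bhattacharyya u v) := by
    have := one_add_mul_le_pow (a := bhattacharyya u v - 1)
      (by linarith [bhattacharyya_nonneg u v]) n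
    simp only [add_sub_cancel] at this
    linarith
  refine le_trans ?_ (one_sub_sqrt_le_sum_min (fun t => prod_nonneg fun i _ => hu _)
    (fun t => prod_nonneg fun i _ => hv _) (sum_prod_eq_one hu1 n) (sum_prod_eq_one hv1 n))
  rw [bhattacharyya_pi hu hv]
  gcongr 1 - √?_
  linarith

lemma bhattacharyya_mixture {κ : Type*} [Fintype κ] {m : ι → ℝ} (hm : ∀ i, 0 ≤ m i)
    (u v : ι → κ → ℝ) :
    bhattacharyya (fun a : ι × κ => m a.1 * u a.1 a.2) (fun a => m a.1 * v a.1 a.2)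
      = ∑ i, m i * bhattacharyya (u i) (v i) := by
  simp only [bhattacharyya, Fintype.sum_prod_type, mul_sum]
  refine sum_congr rfl fun i _ => sum_congr rfl fun k _ => ?_
  rw [mul_mul_mul_comm, ← sq, Real.sqrt_mul (sq_nonneg _), Real.sqrt_sq (hm i)]

end Bhattacharyya

section Bernoulli

def bernWeight (a : ℝ) : Bool → ℝ := fun b => if b then a else 1 - a

lemma sum_bernWeight (a : ℝ) : ∑ b, bernWeight a b = 1 := by
  simp [bernWeight]

lemma bernWeight_nonneg {a : ℝ} (ha0 : 0 ≤ a) (ha1 : a ≤ 1) (b : Bool) :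
    0 ≤ bernWeight a b := by
  cases b <;> simp [bernWeight] <;> linarith

lemma sq_sqrt_sub_sqrt_mul_add_le {a b : ℝ} (ha : 0 ≤ a) (hb : 0 ≤ b) :
    (√a - √b) ^ 2 * (a + b) ≤ (a - b) ^ 2 := by
  have hfactor : a - b = (√a - √b) * (√a + √b) := by
    linear_combination Real.sq_sqrt hb - Real.sq_sqrt ha
  have hsum : a + b ≤ (√a + √b) ^ 2 := by
    nlinarith [Real.sq_sqrt ha, Real.sq_sqrt hb, Real.sqrt_nonneg a, Real.sqrt_nonneg b]
  rw [hfactor, mul_pow]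
  exact mul_le_mul_of_nonneg_left hsum (sq_nonneg _)

lemma one_sub_mul_sq_le_bhattacharyya_bernWeight {e h : ℝ} (he0 : 0 < e) (he1 : e ≤ 1)
    (hh0 : 0 ≤ h) (hh1 : h ≤ 1) :
    1 - e * h ^ 2
      ≤ bhattacharyya (bernWeight (e * ((1 + h) / 2))) (bernWeight (e * ((1 - h) / 2))) := by
  set a := e * ((1 + h) / 2)
  set b := e * ((1 - h) / 2)
  have ha : 0 ≤ a := by positivity
  have hb : 0 ≤ b := mul_nonneg he0.le (by linarith)
  have ha1 : a ≤ 1 := show e * ((1 + h) / 2) ≤ 1 by nlinarith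
  have hb1 : b ≤ 1 := show e * ((1 - h) / 2) ≤ 1 by nlinarith
  have hab : a - b = e * h := by ring
  have hhellinger := sum_sq_sqrt_sub_sqrt (bernWeight_nonneg ha ha1) (bernWeight_nonneg hb hb1)
  rw [sum_bernWeight, sum_bernWeight, Fintype.sum_bool] at hhellinger
  simp only [bernWeight, if_true, Bool.false_eq_true, if_false] at hhellinger
  have hA : (√a - √b) ^ 2 ≤ e * h ^ 2 := by
    refine le_of_mul_le_mul_right ?_ he0
    have := sq_sqrt_sub_sqrt_mul_add_le ha hb
    rw [show a + b = e by ring, hab] at this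
    linarith
  have hB : (√(1 - a) - √(1 - b)) ^ 2 ≤ e * h ^ 2 := by
    have := sq_sqrt_sub_sqrt_mul_add_le (a := 1 - a) (b := 1 - b) (by linarith) (by linarith)
    rw [show 1 - a + (1 - b) = 2 - e by ring, show 1 - a - (1 - b) = -(e * h) by ring] at this
    nlinarith [sq_nonneg (√(1 - a) - √(1 - b)), sq_nonneg h]
  linarith

end Bernoulli

def ofBool (b : Bool) : ℝ := if b then 1 else 0

lemma ofBool_eq_zero_or_one (b : Bool) : ofBool b = 0 ∨ ofBool b = 1 := by
  cases b <;> simp [ofBool]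

lemma one_le_ite_ofBool_add_ite_ofBool_not (c : ℝ) (b : Bool) :
    1 ≤ (if c = ofBool b then 0 else 1 : ℝ) + if c = ofBool (!b) then 0 else 1 := by
  cases b <;> by_cases hc : c = 0 <;> simp [ofBool, hc] <;> split_ifs <;> norm_num

section Assouad

variable {κ ι : Type*} [DecidableEq κ] [Fintype ι]

def flipAt (j : κ) (σ : κ → Bool) : κ → Bool := Function.update σ j (!σ j)

lemma flipAt_of_ne {j k : κ} (hk : k ≠ j) (σ : κ → Bool) : flipAt j σ k = σ k :=
  Function.update_of_ne hk _ σ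

lemma flipAt_involutive (j : κ) : Function.Involutive (flipAt j) := by
  intro σ
  ext k
  by_cases hk : k = j
  · subst hk; simp [flipAt]
  · simp [flipAt_of_ne hk]

lemma mul_sum_min_le_add_flipAt (W : (κ → Bool) → ι → ℝ) (hW : ∀ σ t, 0 ≤ W σ t)
    {ℓ : ι → Bool → ℝ} (hℓ : ∀ t b, 0 ≤ ℓ t b) {δ : ℝ}
    (hδ : ∀ t b, δ ≤ ℓ t b + ℓ t (!b)) (j : κ) (σ : κ → Bool) :
    δ * ∑ t, min (W σ t) (W (flipAt j σ) t)
      ≤ ∑ t, W σ t * ℓ t (σ j) + ∑ t, W (flipAt j σ) t * ℓ t (flipAt j σ j) := by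
  rw [mul_sum, ← sum_add_distrib]
  refine sum_le_sum fun t _ => ?_
  have hmin : 0 ≤ min (W σ t) (W (flipAt j σ) t) := le_min (hW _ _) (hW _ _)
  have hflip : flipAt j σ j = !σ j := Function.update_self _ _ _
  rw [hflip]
  calc δ * min (W σ t) (W (flipAt j σ) t)
      ≤ min (W σ t) (W (flipAt j σ) t) * (ℓ t (σ j) + ℓ t (!σ j)) := by
        rw [mul_comm]; exact mul_le_mul_of_nonneg_left (hδ t _) hmin
    _ ≤ W σ t * ℓ t (σ j) + W (flipAt j σ) t * ℓ t (!σ j) := by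
        rw [mul_add]
        exact add_le_add (mul_le_mul_of_nonneg_right (min_le_left _ _) (hℓ _ _))
          (mul_le_mul_of_nonneg_right (min_le_right _ _) (hℓ _ _))

/-- Assouad's lemma: `W σ` is the law of the sample under the hypercube vertex `σ`, and
`ℓ t j b` is the loss suffered on coordinate `j` from the sample `t` if that coordinate is `b`. -/
theorem exists_assouad_lower_bound [Fintype κ] (W : (κ → Bool) → ι → ℝ)
    (hW : ∀ σ t, 0 ≤ W σ t) (J : Finset κ) {D : ℝ}
    (hD : ∀ j ∈ J, ∀ σ, D ≤ ∑ t, min (W σ t) (W (flipAt j σ) t))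
    {ℓ : ι → κ → Bool → ℝ} (hℓ : ∀ t j b, 0 ≤ ℓ t j b) {δ : ℝ} (hδ0 : 0 ≤ δ)
    (hδ : ∀ j ∈ J, ∀ t b, δ ≤ ℓ t j b + ℓ t j (!b)) :
    ∃ σ, #J * (δ * D) / 2 ≤ ∑ j ∈ J, ∑ t, W σ t * ℓ t j (σ j) := by
  set F : κ → (κ → Bool) → ℝ := fun j σ => ∑ t, W σ t * ℓ t j (σ j)
  have hpair : ∀ j ∈ J, ∑ σ : κ → Bool, δ * D / 2 ≤ ∑ σ, F j σ := fun j hj => by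
    have hflip : ∑ σ, F j (flipAt j σ) = ∑ σ, F j σ :=
      (flipAt_involutive j).bijective.sum_comp (F j)
    have := sum_le_sum fun σ (_ : σ ∈ univ) =>
      (mul_le_mul_of_nonneg_left (hD j hj σ) hδ0).trans
        (mul_sum_min_le_add_flipAt W hW (fun t => hℓ t j) (hδ j hj) j σ)
    rw [sum_add_distrib, hflip] at this
    rw [← sum_div]
    linarith
  have htotal : ∑ σ : κ → Bool, #J * (δ * D) / 2 ≤ ∑ σ, ∑ j ∈ J, F j σ := by
    rw [sum_comm]
    calc ∑ σ : κ → Bool, #J * (δ * D) / 2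
        = ∑ j ∈ J, ∑ σ : κ → Bool, δ * D / 2 := by
          simp only [sum_const, card_univ, nsmul_eq_mul]; ring
      _ ≤ ∑ j ∈ J, ∑ σ, F j σ := sum_le_sum hpair
  obtain ⟨σ, -, hσ⟩ := exists_le_of_sum_le univ_nonempty htotal
  exact ⟨σ, hσ⟩

end Assouad

section PUWeight

variable {κ : Type*} {m η : κ → ℝ} {e : ℝ}

/-- Atoms are indexed by `((j, s), y)` (point `j`, label `S = s`, class `Y = y`), so that the
observed pair `(X, S)` depends on the first component only; given `Y = y`, `S` is Bernoulli
with parameter `e * y`. -/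
def puWeight (m η : κ → ℝ) (e : ℝ) : (κ × Bool) × Bool → ℝ :=
  fun a => m a.1.1 * bernWeight (η a.1.1) a.2 * bernWeight (e * ofBool a.2) a.1.2

def observedWeight (m η : κ → ℝ) (e : ℝ) : κ × Bool → ℝ :=
  fun a => m a.1 * bernWeight (e * η a.1) a.2

lemma puWeight_nonneg (hm : ∀ j, 0 ≤ m j) (hη : ∀ j, 0 ≤ η j ∧ η j ≤ 1)
    (he0 : 0 ≤ e) (he1 : e ≤ 1) (a : (κ × Bool) × Bool) : 0 ≤ puWeight m η e a := by
  obtain ⟨hη0, hη1⟩ := hη a.1.1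
  have hb : 0 ≤ ofBool a.2 ∧ ofBool a.2 ≤ 1 := by cases a.2 <;> simp [ofBool]
  exact mul_nonneg (mul_nonneg (hm _) (bernWeight_nonneg hη0 hη1 _))
    (bernWeight_nonneg (by nlinarith) (by nlinarith) _)

lemma observedWeight_nonneg (hm : ∀ j, 0 ≤ m j) (hη : ∀ j, 0 ≤ η j ∧ η j ≤ 1)
    (he0 : 0 ≤ e) (he1 : e ≤ 1) (a : κ × Bool) : 0 ≤ observedWeight m η e a := by
  obtain ⟨hη0, hη1⟩ := hη a.1
  exact mul_nonneg (hm _) (bernWeight_nonneg (by nlinarith) (by nlinarith) _)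

lemma sum_puWeight_eq_observedWeight (b : κ × Bool) :
    ∑ y, puWeight m η e (b, y) = observedWeight m η e b := by
  obtain ⟨j, s⟩ := b
  cases s <;> simp [puWeight, observedWeight, bernWeight, ofBool] <;> ring

lemma sum_observedWeight [Fintype κ] (hm1 : ∑ j, m j = 1) :
    ∑ a, observedWeight m η e a = 1 := by
  simp only [observedWeight, Fintype.sum_prod_type, ← mul_sum, sum_bernWeight, mul_one, hm1]

lemma sum_puWeight [Fintype κ] (hm1 : ∑ j, m j = 1) : ∑ a, puWeight m η e a = 1 := by
  rw [Fintype.sum_prod_type]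
  simp only [sum_puWeight_eq_observedWeight, sum_observedWeight hm1]

lemma bhattacharyya_observedWeight_of_eq_of_ne [Fintype κ] {η' : κ → ℝ} (hm : ∀ j, 0 ≤ m j)
    (hm1 : ∑ j, m j = 1) (hη : ∀ j, 0 ≤ η j ∧ η j ≤ 1) (he0 : 0 ≤ e) (he1 : e ≤ 1)
    {j : κ} (hηη' : ∀ k ≠ j, η k = η' k) :
    bhattacharyya (observedWeight m η e) (observedWeight m η' e)
      = 1 - m j * (1 - bhattacharyya (bernWeight (e * η j)) (bernWeight (e * η' j))) := by
  unfold observedWeight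
  rw [bhattacharyya_mixture hm (fun k => bernWeight (e * η k))
    (fun k => bernWeight (e * η' k))]
  have hsplit : ∀ k, m k * bhattacharyya (bernWeight (e * η k)) (bernWeight (e * η' k))
      = m k - m k * (1 - bhattacharyya (bernWeight (e * η k)) (bernWeight (e * η' k))) :=
    fun k => by ring
  rw [sum_congr rfl fun k _ => hsplit k, sum_sub_distrib, hm1,
    sum_eq_single j (fun k _ hk => ?_) (by simp)]
  obtain ⟨hη0, hη1⟩ := hη k
  rw [← hηη' k hk, bhattacharyya_self (bernWeight_nonneg (by positivity) (by nlinarith)),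
    sum_bernWeight, sub_self, mul_zero]

end PUWeight

section ExcessRisk

lemma abs_excessRisk_le_one {Ω α : Type*} [MeasurableSpace Ω] (P : Measure Ω)
    [IsProbabilityMeasure P] (X : Ω → α) (Y : Ω → ℝ) (η : α → ℝ) (g : α → ℝ) :
    |excessRisk P X Y η g| ≤ 1 := by
  have hrisk : ∀ c : α → ℝ, 0 ≤ risk P X Y c ∧ risk P X Y c ≤ 1 := fun c =>
    ⟨ENNReal.toReal_nonneg,
      ENNReal.toReal_le_of_le_ofReal zero_le_one (by simpa using prob_le_one)⟩
  rw [excessRisk, abs_le]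
  constructor <;> linarith [hrisk g, hrisk (bayes η)]

lemma integral_excessRisk_le_one {Ω α β : Type*} [MeasurableSpace Ω] [MeasurableSpace β]
    (P : Measure Ω) [IsProbabilityMeasure P] (X : Ω → α) (Y : Ω → ℝ) (η : α → ℝ)
    (ν : Measure β) [IsProbabilityMeasure ν] (f : β → α → ℝ) :
    ∫ z, excessRisk P X Y η (f z) ∂ν ≤ 1 := by
  have := norm_integral_le_of_norm_le_const (μ := ν) (C := 1)
    (Filter.Eventually.of_forall fun z => (Real.norm_eq_abs _).trans_le
      (abs_excessRisk_le_one P X Y η (f z)))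
  rw [probReal_univ, mul_one] at this
  exact (le_abs_self _).trans this

lemma bddAbove_range_integral_excessRisk {α : Type*} [MeasurableSpace α] (e : α → ℝ)
    (𝒮 : Set (α → ℝ)) (h : ℝ) {n : ℕ} (f : (Fin n → α × ℝ) → α → ℝ) :
    BddAbove (Set.range fun q :
        {q : Measure (α × ℝ × ℝ) × (α → ℝ) // PUAdmissible e 𝒮 h q.1 q.2} =>
      ∫ z, excessRisk q.1.1 (fun p => p.1) (fun p => p.2.1) q.1.2 (f z)
        ∂Measure.pi fun _ : Fin n => q.1.1.map fun p => (p.1, p.2.2)) := by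
  refine ⟨1, ?_⟩
  rintro _ ⟨q, rfl⟩
  have := q.2.1
  have : IsProbabilityMeasure (q.1.1.map fun p => (p.1, p.2.2)) :=
    Measure.isProbabilityMeasure_map (measurable_fst.prodMk measurable_snd.snd).aemeasurable
  exact integral_excessRisk_le_one _ _ _ _ _ _

end ExcessRisk

section PULaw

variable {α κ : Type*} [MeasurableSpace α] [MeasurableSingletonClass α] [Fintype κ]
  {m : κ → ℝ} {x : κ → α} {η : α → ℝ} {e : ℝ}

def puLaw (m : κ → ℝ) (x : κ → α) (η : α → ℝ) (e : ℝ) : Measure (α × ℝ × ℝ) :=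
  atomicMeasure (puWeight m (η ∘ x) e) fun a => (x a.1.1, ofBool a.2, ofBool a.1.2)

lemma isProbabilityMeasure_puLaw (hm : ∀ j, 0 ≤ m j) (hm1 : ∑ j, m j = 1)
    (hη : ∀ a, 0 ≤ η a ∧ η a ≤ 1) (he0 : 0 ≤ e) (he1 : e ≤ 1) :
    IsProbabilityMeasure (puLaw m x η e) :=
  isProbabilityMeasure_atomicMeasure
    (puWeight_nonneg (η := η ∘ x) hm (fun j => hη (x j)) he0 he1) (sum_puWeight hm1) _

lemma ae_puLaw_mem :
    ∀ᵐ q ∂puLaw m x η e, (q.2.1 = 0 ∨ q.2.1 = 1) ∧ (q.2.2 = 0 ∨ q.2.2 = 1) :=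
  ae_atomicMeasure fun _ _ => ⟨ofBool_eq_zero_or_one _, ofBool_eq_zero_or_one _⟩

lemma ae_puLaw_label_le : ∀ᵐ q ∂puLaw m x η e, q.2.2 ≤ q.2.1 := by
  refine ae_atomicMeasure fun ⟨⟨j, s⟩, y⟩ hw => ?_
  cases y <;> cases s <;> simp_all [puWeight, bernWeight, ofBool]

lemma setIntegral_fst_preimage_puLaw_congr (hm : ∀ j, 0 ≤ m j)
    (hη : ∀ a, 0 ≤ η a ∧ η a ≤ 1) (he0 : 0 ≤ e) (he1 : e ≤ 1) {F G : α × ℝ × ℝ → ℝ}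
    (hFG : ∀ j, ∑ s, ∑ y, puWeight m (η ∘ x) e ((j, s), y) * F (x j, ofBool y, ofBool s)
      = ∑ s, ∑ y, puWeight m (η ∘ x) e ((j, s), y) * G (x j, ofBool y, ofBool s))
    {A : Set α} (hA : MeasurableSet A) :
    ∫ q in Prod.fst ⁻¹' A, F q ∂puLaw m x η e
      = ∫ q in Prod.fst ⁻¹' A, G q ∂puLaw m x η e := by
  classical
  have hw := puWeight_nonneg (η := η ∘ x) hm (fun j => hη (x j)) he0 he1
  simp only [puLaw, setIntegral_atomicMeasure hw _ _ (measurable_fst hA), Set.mem_preimage,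
    Fintype.sum_prod_type]
  refine sum_congr rfl fun j _ => ?_
  by_cases hj : x j ∈ A
  · simpa [hj] using hFG j
  · simp [hj]

lemma isRegression_puLaw (hm : ∀ j, 0 ≤ m j) (hη : ∀ a, 0 ≤ η a ∧ η a ≤ 1)
    (hηm : Measurable η) (he0 : 0 ≤ e) (he1 : e ≤ 1) :
    IsRegression (puLaw m x η e) (fun p => p.1) (fun p => p.2.1) η :=
  ⟨hηm, hη, fun _ hA => setIntegral_fst_preimage_puLaw_congr hm hη he0 he1
    (fun j => by simp [puWeight, bernWeight, ofBool]; ring) hA⟩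

lemma isPropensity_puLaw (hm : ∀ j, 0 ≤ m j) (hη : ∀ a, 0 ≤ η a ∧ η a ≤ 1)
    (he0 : 0 ≤ e) (he1 : e ≤ 1) :
    IsPropensity (puLaw m x η e) (fun p => p.1) (fun p => p.2.1) (fun p => p.2.2) fun _ => e :=
  ⟨measurable_const, fun _ => ⟨he0, he1⟩, ae_puLaw_label_le,
    fun _ hA => setIntegral_fst_preimage_puLaw_congr hm hη he0 he1
      (fun j => by simp [puWeight, bernWeight, ofBool]; ring) hA⟩

lemma risk_puLaw (hm : ∀ j, 0 ≤ m j) (hη : ∀ a, 0 ≤ η a ∧ η a ≤ 1) (he0 : 0 ≤ e)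
    (he1 : e ≤ 1) (c : α → ℝ) :
    risk (puLaw m x η e) (fun p => p.1) (fun p => p.2.1) c
      = ∑ j, m j * (η (x j) * (if c (x j) = 1 then 0 else 1)
          + (1 - η (x j)) * (if c (x j) = 0 then 0 else 1)) := by
  rw [risk, puLaw, atomicMeasure_apply_toReal
    (puWeight_nonneg (η := η ∘ x) hm (fun j => hη (x j)) he0 he1)]
  simp only [Fintype.sum_prod_type]
  refine sum_congr rfl fun j _ => ?_
  by_cases h1 : c (x j) = 1 <;> by_cases h0 : c (x j) = 0 <;>
    simp [h1, h0, puWeight, bernWeight, ofBool] <;> ring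

lemma map_puLaw (hm : ∀ j, 0 ≤ m j) (hη : ∀ a, 0 ≤ η a ∧ η a ≤ 1) (he0 : 0 ≤ e)
    (he1 : e ≤ 1) :
    (puLaw m x η e).map (fun q => (q.1, q.2.2))
      = atomicMeasure (observedWeight m (η ∘ x) e) fun b => (x b.1, ofBool b.2) := by
  rw [puLaw, map_atomicMeasure _ _ (measurable_fst.prodMk measurable_snd.snd)]
  refine (atomicMeasure_comp_fst (puWeight_nonneg (η := η ∘ x) hm (fun j => hη (x j)) he0 he1)
    (fun b : κ × Bool => (x b.1, ofBool b.2))).trans ?_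
  simp only [sum_puWeight_eq_observedWeight]

end PULaw

section Massart

variable {α : Type*} {h : ℝ} {g : α → ℝ}

def massartEta (h : ℝ) (g : α → ℝ) : α → ℝ := fun a => (1 - h) / 2 + h * g a

lemma massartEta_mem (hh0 : 0 ≤ h) (hh1 : h ≤ 1) (hg : ∀ a, g a = 0 ∨ g a = 1) (a : α) :
    0 ≤ massartEta h g a ∧ massartEta h g a ≤ 1 := by
  rcases hg a with hga | hga <;> simp only [massartEta, hga] <;> constructor <;> linarith

lemma bayes_massartEta (hh0 : 0 < h) (hg : ∀ a, g a = 0 ∨ g a = 1) :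
    bayes (massartEta h g) = g := by
  funext a
  rcases hg a with hga | hga <;> simp only [bayes, massartEta, hga]
  · rw [if_neg (by linarith)]
  · rw [if_pos (by linarith)]

lemma le_abs_two_mul_massartEta_sub_one (hg : ∀ a, g a = 0 ∨ g a = 1) (a : α) :
    h ≤ |2 * massartEta h g a - 1| := by
  rcases hg a with hga | hga <;> simp only [massartEta, hga] <;> rw [le_abs] <;> first
    | (left; linarith) | (right; linarith)

variable [MeasurableSpace α] [MeasurableSingletonClass α] {κ : Type*} [Fintype κ]
  {m : κ → ℝ} {x : κ → α} {e : ℝ}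

lemma puAdmissible_puLaw_massartEta {𝒮 : Set (α → ℝ)} (hg𝒮 : g ∈ 𝒮) (hg : IsClassifier g)
    (hm : ∀ j, 0 ≤ m j) (hm1 : ∑ j, m j = 1) (hh0 : 0 < h) (hh1 : h ≤ 1) (he0 : 0 ≤ e)
    (he1 : e ≤ 1) :
    PUAdmissible (fun _ => e) 𝒮 h (puLaw m x (massartEta h g) e) (massartEta h g) := by
  have hη := massartEta_mem hh0.le hh1 hg.2
  refine ⟨isProbabilityMeasure_puLaw hm hm1 hη he0 he1, ae_puLaw_mem,
    isRegression_puLaw hm hη (measurable_const.add (hg.1.const_mul h)) he0 he1,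
    isPropensity_puLaw hm hη he0 he1, ?_, le_abs_two_mul_massartEta_sub_one hg.2⟩
  rwa [bayes_massartEta hh0 hg.2]

lemma excessRisk_puLaw_massartEta (hm : ∀ j, 0 ≤ m j) (hh0 : 0 < h) (hh1 : h ≤ 1)
    (hg : ∀ a, g a = 0 ∨ g a = 1) (he0 : 0 ≤ e) (he1 : e ≤ 1) {c : α → ℝ}
    (hc : ∀ a, c a = 0 ∨ c a = 1) :
    excessRisk (puLaw m x (massartEta h g) e) (fun p => p.1) (fun p => p.2.1) (massartEta h g) c
      = ∑ j, m j * (h * if c (x j) = g (x j) then 0 else 1) := by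
  have hη := massartEta_mem hh0.le hh1 hg
  rw [excessRisk, bayes_massartEta hh0 hg, risk_puLaw hm hη he0 he1, risk_puLaw hm hη he0 he1,
    ← sum_sub_distrib]
  refine sum_congr rfl fun j _ => ?_
  rcases hc (x j) with hcj | hcj <;> rcases hg (x j) with hgj | hgj <;>
    simp [massartEta, hcj, hgj] <;> ring

lemma integral_excessRisk_puLaw_massartEta (hm : ∀ j, 0 ≤ m j) (hh0 : 0 < h) (hh1 : h ≤ 1)
    (hg : ∀ a, g a = 0 ∨ g a = 1) (he0 : 0 ≤ e) (he1 : e ≤ 1) {n : ℕ}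
    (f : (Fin n → α × ℝ) → α → ℝ) (hf : ∀ z a, f z a = 0 ∨ f z a = 1) :
    ∫ z, excessRisk (puLaw m x (massartEta h g) e) (fun p => p.1) (fun p => p.2.1)
        (massartEta h g) (f z)
      ∂Measure.pi (fun _ : Fin n => (puLaw m x (massartEta h g) e).map fun p => (p.1, p.2.2))
      = ∑ t : Fin n → κ × Bool, (∏ i, observedWeight m (massartEta h g ∘ x) e (t i))
          * ∑ j, m j * (h * if f (fun i => (x (t i).1, ofBool (t i).2)) (x j) = g (x j)
              then 0 else 1) := by
  have hη := massartEta_mem hh0.le hh1 hg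
  have hw := observedWeight_nonneg (η := massartEta h g ∘ x) hm (fun j => hη (x j)) he0 he1
  rw [map_puLaw hm hη he0 he1, pi_atomicMeasure n hw,
    integral_atomicMeasure fun t => prod_nonneg fun i _ => hw _]
  simp only [excessRisk_puLaw_massartEta hm hh0 hh1 hg he0 he1 (hf _)]

end Massart

section Hypercube

variable {κ : Type*} [Fintype κ] [DecidableEq κ] {m : κ → ℝ} {j : κ} {p h e : ℝ}

def hardMarginal (j₀ : κ) (p : ℝ) : κ → ℝ :=
  fun j => if j = j₀ then 1 - (Fintype.card κ - 1) * p else p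

lemma hardMarginal_nonneg {j₀ : κ} (hp0 : 0 ≤ p) (hp : (Fintype.card κ - 1) * p ≤ 1)
    (j : κ) : 0 ≤ hardMarginal j₀ p j := by
  unfold hardMarginal; split_ifs <;> linarith

lemma sum_hardMarginal (j₀ : κ) : ∑ j, hardMarginal j₀ p j = 1 := by
  simp only [hardMarginal]
  rw [← add_sum_erase _ _ (mem_univ j₀), sum_congr rfl fun j hj => if_neg (ne_of_mem_erase hj),
    if_pos rfl, sum_const, card_erase_of_mem (mem_univ j₀), card_univ,
    nsmul_eq_mul, Nat.cast_pred (Fintype.card_pos_iff.2 ⟨j₀⟩)]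
  ring

lemma one_sub_le_bhattacharyya_flipAt (hm : ∀ j, 0 ≤ m j) (hm1 : ∑ j, m j = 1) (hmj : m j ≤ p)
    (hh0 : 0 ≤ h) (hh1 : h ≤ 1) (he0 : 0 < e) (he1 : e ≤ 1) (σ : κ → Bool) :
    1 - p * e * h ^ 2 ≤ bhattacharyya (observedWeight m (massartEta h (ofBool ∘ σ)) e)
      (observedWeight m (massartEta h (ofBool ∘ flipAt j σ)) e) := by
  rw [bhattacharyya_observedWeight_of_eq_of_ne (j := j) hm hm1
    (massartEta_mem (g := ofBool ∘ σ) hh0 hh1 fun k => ofBool_eq_zero_or_one _) he0.le he1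
    fun k hk => by simp [massartEta, flipAt_of_ne hk]]
  have hb : 1 - e * h ^ 2 ≤ bhattacharyya (bernWeight (e * massartEta h (ofBool ∘ σ) j))
      (bernWeight (e * massartEta h (ofBool ∘ flipAt j σ) j)) := by
    have key := one_sub_mul_sq_le_bhattacharyya_bernWeight he0 he1 hh0 hh1
    cases hσ : σ j
    · rw [bhattacharyya_comm]
      convert key using 4 <;> simp [massartEta, flipAt, hσ, ofBool]
      ring
    · convert key using 4 <;> simp [massartEta, flipAt, hσ, ofBool]
      ring
  nlinarith [hm j, mul_le_mul_of_nonneg_right hmj (by positivity : 0 ≤ e * h ^ 2)]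

lemma one_sub_sqrt_le_sum_min_pi_flipAt (hm : ∀ j, 0 ≤ m j) (hm1 : ∑ j, m j = 1)
    (hmj : m j ≤ p) (hh0 : 0 ≤ h) (hh1 : h ≤ 1) (he0 : 0 < e) (he1 : e ≤ 1) (σ : κ → Bool)
    (n : ℕ) :
    1 - √(2 * p * e * h ^ 2 * n) ≤ ∑ t : Fin n → κ × Bool,
      min (∏ i, observedWeight m (massartEta h (ofBool ∘ σ)) e (t i))
        (∏ i, observedWeight m (massartEta h (ofBool ∘ flipAt j σ)) e (t i)) := by
  have hw : ∀ τ : κ → Bool, ∀ a, 0 ≤ observedWeight m (massartEta h (ofBool ∘ τ)) e a :=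
    fun τ => observedWeight_nonneg hm
      (massartEta_mem (g := ofBool ∘ τ) hh0 hh1 fun k => ofBool_eq_zero_or_one _) he0.le he1
  refine le_trans ?_ (one_sub_sqrt_le_sum_min_pi (hw σ) (hw _) (sum_observedWeight hm1)
    (sum_observedWeight hm1) n)
  gcongr 1 - √?_
  nlinarith [one_sub_le_bhattacharyya_flipAt hm hm1 hmj hh0 hh1 he0 he1 σ,
    (n.cast_nonneg : (0 : ℝ) ≤ n)]

theorem exists_le_integral_excessRisk_puLaw {α : Type*} [MeasurableSpace α]
    [MeasurableSingletonClass α] {x : κ → α} (j₀ : κ) {G : (κ → Bool) → α → ℝ}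
    (hG : ∀ σ a, G σ a = 0 ∨ G σ a = 1) (hGx : ∀ σ k, G σ (x k) = ofBool (σ k)) (hp0 : 0 ≤ p)
    (hp : (Fintype.card κ - 1) * p ≤ 1) (hh0 : 0 < h) (hh1 : h ≤ 1) (he0 : 0 < e)
    (he1 : e ≤ 1) {n : ℕ} (f : (Fin n → α × ℝ) → α → ℝ) (hf : ∀ z a, f z a = 0 ∨ f z a = 1) :
    ∃ σ, p * h / 4 * (Fintype.card κ - 1) * (1 - √(2 * p * e * h ^ 2 * n)) ≤
      ∫ z, excessRisk (puLaw (hardMarginal j₀ p) x (massartEta h (G σ)) e) (fun q => q.1)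
          (fun q => q.2.1) (massartEta h (G σ)) (f z)
        ∂Measure.pi fun _ : Fin n =>
          (puLaw (hardMarginal j₀ p) x (massartEta h (G σ)) e).map fun q => (q.1, q.2.2) := by
  set m := hardMarginal j₀ p
  have hm : ∀ j, 0 ≤ m j := hardMarginal_nonneg hp0 hp
  have hm1 : ∑ j, m j = 1 := sum_hardMarginal j₀
  set W : (κ → Bool) → (Fin n → κ × Bool) → ℝ :=
    fun σ t => ∏ i, observedWeight m (massartEta h (ofBool ∘ σ)) e (t i)
  have hW : ∀ σ t, 0 ≤ W σ t := fun σ t => prod_nonneg fun i _ => observedWeight_nonneg hm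
    (massartEta_mem (g := ofBool ∘ σ) hh0.le hh1 fun k => ofBool_eq_zero_or_one _) he0.le he1 _
  -- `max … 0` lets us trade the factor `1 / 2` of Assouad's bound for the `1 / 4` above.
  set D := max (1 - √(2 * p * e * h ^ 2 * n)) 0
  have hD : ∀ j ∈ univ.erase j₀, ∀ σ, D ≤ ∑ t, min (W σ t) (W (flipAt j σ) t) :=
    fun j hj σ => max_le (one_sub_sqrt_le_sum_min_pi_flipAt hm hm1
      (if_neg (ne_of_mem_erase hj)).le hh0.le hh1 he0 he1 σ n)
      (sum_nonneg fun t _ => le_min (hW σ t) (hW _ t))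
  set ℓ : (Fin n → κ × Bool) → κ → Bool → ℝ := fun t j b =>
    m j * (h * if f (fun i => (x (t i).1, ofBool (t i).2)) (x j) = ofBool b then 0 else 1)
  have hℓ : ∀ t j b, 0 ≤ ℓ t j b := fun t j b =>
    mul_nonneg (hm j) (mul_nonneg hh0.le (by split_ifs <;> norm_num))
  have hδ : ∀ j ∈ univ.erase j₀, ∀ t b, p * h ≤ ℓ t j b + ℓ t j (!b) := fun j hj t b => by
    have := one_le_ite_ofBool_add_ite_ofBool_not
      (f (fun i => (x (t i).1, ofBool (t i).2)) (x j)) b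
    simp only [ℓ, m, hardMarginal, if_neg (ne_of_mem_erase hj)]
    nlinarith [mul_nonneg hp0 hh0.le]
  obtain ⟨σ, hσ⟩ := exists_assouad_lower_bound W hW (univ.erase j₀) hD hℓ
    (mul_nonneg hp0 hh0.le) hδ
  refine ⟨σ, ?_⟩
  have hcomp : massartEta h (G σ) ∘ x = massartEta h (ofBool ∘ σ) :=
    funext fun k => by simp [massartEta, hGx]
  rw [integral_excessRisk_puLaw_massartEta hm hh0 hh1 (hG σ) he0.le he1 f hf, hcomp]
  simp only [hGx]
  change _ ≤ ∑ t, W σ t * ∑ j, ℓ t j (σ j)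
  have hcard : (#(univ.erase j₀) : ℝ) = Fintype.card κ - 1 := by
    rw [card_erase_of_mem (mem_univ _), card_univ,
      Nat.cast_pred (Fintype.card_pos_iff.2 ⟨j₀⟩)]
  have hcard0 : (0 : ℝ) ≤ Fintype.card κ - 1 := hcard ▸ Nat.cast_nonneg _
  calc p * h / 4 * (Fintype.card κ - 1) * (1 - √(2 * p * e * h ^ 2 * n))
      ≤ #(univ.erase j₀) * (p * h * D) / 2 := by
        rw [hcard]
        nlinarith [mul_nonneg (mul_nonneg hp0 hh0.le) hcard0,
          le_max_left (1 - √(2 * p * e * h ^ 2 * n)) 0,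
          le_max_right (1 - √(2 * p * e * h ^ 2 * n)) 0]
    _ ≤ ∑ j ∈ univ.erase j₀, ∑ t, W σ t * ℓ t j (σ j) := hσ
    _ ≤ ∑ j, ∑ t, W σ t * ℓ t j (σ j) :=
        sum_le_sum_of_subset_of_nonneg (erase_subset _ _) fun j _ _ =>
          sum_nonneg fun t _ => mul_nonneg (hW σ t) (hℓ t j _)
    _ = ∑ t, W σ t * ∑ j, ℓ t j (σ j) := by
        rw [sum_comm]
        simp only [mul_sum]

end Hypercube

/-- **Assouad-type lower bound (proof of Theorem 2, before optimizing `p`).**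
Under the SCAR assumption `e(x) = e_m` with `0 < e_m ≤ 1`, if `𝒮` has VC dimension
`V ≥ 2` and `h ∈ (0,1]`, then for every `0 < p < 1/(V−1)` the minimax risk satisfies
`R(S,h) ≥ (p·h/4)·(V−1)·(1 − √(2·p·e_m·h²·n))`. -/
theorem minimax_lower_bound_SCAR_Assouad
    (d : ℕ) (𝒮 : Set ((Fin d → ℝ) → ℝ)) (V n : ℕ) (e_m h p : ℝ)
    (h𝒮 : ∀ g ∈ 𝒮, IsClassifier g) (hVC : HasVCDim 𝒮 V) (hV : 2 ≤ V)
    (hem0 : 0 < e_m) (hem1 : e_m ≤ 1) (hh0 : 0 < h) (hh1 : h ≤ 1)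
    (hp0 : 0 < p) (hp1 : p < 1 / ((V : ℝ) - 1)) :
    p * h / 4 * ((V : ℝ) - 1) * (1 - Real.sqrt (2 * p * e_m * h ^ 2 * (n : ℝ))) ≤
      minimaxRisk (fun _ : Fin d → ℝ => e_m) 𝒮 h n := by
  obtain ⟨x, hx⟩ := hVC.1
  choose G hG𝒮 hGx using hx
  have hpV : ((Fintype.card (Fin V) : ℝ) - 1) * p ≤ 1 := by
    have hV' : (2 : ℝ) ≤ V := by exact_mod_cast hV
    rw [Fintype.card_fin]
    rw [lt_div_iff₀ (by linarith : (0 : ℝ) < V - 1)] at hp1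
    linarith
  have : Nonempty {f : (Fin n → (Fin d → ℝ) × ℝ) → (Fin d → ℝ) → ℝ // ∀ z, f z ∈ 𝒮} :=
    ⟨⟨fun _ => G default, fun _ => hG𝒮 _⟩⟩
  refine le_ciInf fun ghat => ?_
  obtain ⟨σ, hσ⟩ := exists_le_integral_excessRisk_puLaw ⟨0, by omega⟩
    (fun σ => (h𝒮 _ (hG𝒮 σ)).2) hGx hp0.le hpV hh0 hh1 hem0 hem1 ghat.1
    fun z => (h𝒮 _ (ghat.2 z)).2
  rw [Fintype.card_fin] at hσ
  exact hσ.trans (le_ciSup (bddAbove_range_integral_excessRisk _ _ _ ghat.1)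
    ⟨(_, massartEta h (G σ)), puAdmissible_puLaw_massartEta (hG𝒮 σ) (h𝒮 _ (hG𝒮 σ))
      (hardMarginal_nonneg hp0.le hpV) (sum_hardMarginal _) hh0 hh1 hem0.le hem1⟩)
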